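/- arXiv:2006.16791 — 3 statements merged into one kernel-verified Lean document; each statement's English description precedes it below -/
import Mathlib

section
/- In a Bayesian network satisfying the Markov condition, the joint probability distribution over all variables factorizes as the product over each node of the conditional probability of that node given its parents. -/
open scoped Classical

/-- A directed graph is acyclic if no vertex reaches itself by a nonempty directed walk. -/
def Acyclic {V : Type*} (adj : V → V → Prop) : Prop :=
  ∀ v, ¬ Relation.TransGen adj v v

/-- `Desc adj x y` : `y` is a (proper) descendant of `x`. -/
def Desc {V : Type*} (adj : V → V → Prop) (x y : V) : Prop :=
  Relation.TransGen adj x y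

/-- An (undirected) path between `M` and `N` in the directed graph `adj`,
represented as the list of its vertices. -/
def IsTrail {V : Type*} (adj : V → V → Prop) (p : List V) (M N : V) : Prop :=
  p.Chain' (fun a b => adj a b ∨ adj b a) ∧ p.head? = some M ∧ p.getLast? = some N ∧
    p.Nodup ∧ 2 ≤ p.length

/-- Interior position `i` of the path `p` is a collider (both adjacent edges point into it). -/
def ColliderAt {V : Type*} (adj : V → V → Prop) (p : List V) (i : ℕ) : Prop :=
  ∃ a x b, p[i-1]? = some a ∧ p[i]? = some x ∧ p[i+1]? = some b ∧ adj a x ∧ adj b x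

/-- The path `p` is blocked by the conditioning set `Z`: some interior node is a
non-collider belonging to `Z`, or a collider such that neither it nor any of its
descendants belongs to `Z`. -/
def Blocked {V : Type*} (adj : V → V → Prop) (Z : Set V) (p : List V) : Prop :=
  ∃ i x, 0 < i ∧ i + 1 < p.length ∧ p[i]? = some x ∧
    ((¬ ColliderAt adj p i ∧ x ∈ Z) ∨
     (ColliderAt adj p i ∧ x ∉ Z ∧ ∀ d, Desc adj x d → d ∉ Z))

/-- `Z` d-separates `M` and `N`: every path between them is blocked. -/
def DSep {V : Type*} (adj : V → V → Prop) (Z : Set V) (M N : V) : Prop :=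
  ∀ p, IsTrail adj p M N → Blocked adj Z p

/-- d-separation of sets of nodes. -/
def DSepS {V : Type*} (adj : V → V → Prop) (Z A B : Set V) : Prop :=
  ∀ M ∈ A, ∀ N ∈ B, DSep adj Z M N

/-- Marginal of the joint pmf `p` on the variable set `S`, evaluated at configuration `f`. -/
noncomputable def Marg {V : Type*} [Fintype V] [DecidableEq V] {vals : V → Type*}
    [∀ v, Fintype (vals v)] (p : (∀ v, vals v) → ℝ) (S : Finset V)
    (f : ∀ v, vals v) : ℝ :=
  ∑ u : ∀ v, vals v, if ∀ v ∈ S, u v = f v then p u else 0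

/-- Conditional independence of the variable sets `A` and `B` given `C`,
phrased via the factorization of marginals of the joint pmf `p`. -/
def CI {V : Type*} [Fintype V] [DecidableEq V] {vals : V → Type*}
    [∀ v, Fintype (vals v)] (p : (∀ v, vals v) → ℝ) (A B C : Finset V) : Prop :=
  ∀ f, Marg p (A ∪ B ∪ C) f * Marg p C f = Marg p (A ∪ C) f * Marg p (B ∪ C) f

section Aux
variable {V : Type*} [Fintype V] [DecidableEq V] {vals : V → Type*} [∀ v, Fintype (vals v)]
  (p : (∀ v, vals v) → ℝ)

lemma marg_congr {S : Finset V} {f g : ∀ v, vals v} (h : ∀ v ∈ S, f v = g v) :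
    Marg p S f = Marg p S g := by
  unfold Marg
  refine Finset.sum_congr rfl fun u _ => ?_
  congr 1
  simp only [eq_iff_iff]
  constructor <;> intro h' v hv
  · rw [← h v hv]; exact h' v hv
  · rw [h v hv]; exact h' v hv

lemma marg_nonneg (hnn : ∀ u, 0 ≤ p u) (S : Finset V) (f : ∀ v, vals v) :
    0 ≤ Marg p S f := by
  unfold Marg
  refine Finset.sum_nonneg fun u _ => ?_
  split <;> [exact hnn u; exact le_rfl]

lemma marg_anti (hnn : ∀ u, 0 ≤ p u) {S T : Finset V} (hST : S ⊆ T) (f : ∀ v, vals v) :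
    Marg p T f ≤ Marg p S f := by
  unfold Marg
  refine Finset.sum_le_sum fun u _ => ?_
  by_cases h : ∀ v ∈ T, u v = f v
  · rw [if_pos h, if_pos fun v hv => h v (hST hv)]
  · rw [if_neg h]
    split <;> [exact hnn u; exact le_rfl]

lemma marg_univ (f : ∀ v, vals v) : Marg p Finset.univ f = p f := by
  unfold Marg
  rw [Finset.sum_eq_single f]
  · rw [if_pos fun v _ => rfl]
  · intro u _ hu
    rw [if_neg]
    intro h
    exact hu (funext fun v => h v (Finset.mem_univ v))
  · intro h; exact absurd (Finset.mem_univ _) h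

lemma marg_empty (f : ∀ v, vals v) : Marg p (∅ : Finset V) f = ∑ u, p u := by
  unfold Marg
  refine Finset.sum_congr rfl fun u _ => ?_
  rw [if_pos]
  intro v hv
  exact absurd hv (Finset.notMem_empty v)

lemma marg_sum_out (S : Finset V) (w : V) (hw : w ∈ S) (f : ∀ v, vals v) :
    ∑ t : vals w, Marg p S (Function.update f w t) = Marg p (S.erase w) f := by
  unfold Marg
  rw [Finset.sum_comm]
  refine Finset.sum_congr rfl fun u _ => ?_
  by_cases h : ∀ v ∈ S.erase w, u v = f v
  · rw [if_pos h, Finset.sum_eq_single (u w)]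
    · rw [if_pos]
      intro v hv
      by_cases hvw : v = w
      · subst hvw; simp
      · rw [Function.update_of_ne hvw]
        exact h v (Finset.mem_erase.mpr ⟨hvw, hv⟩)
    · intro t _ ht
      rw [if_neg]
      intro hc
      have := hc w hw
      rw [Function.update_self] at this
      exact ht this.symm
    · intro h'; exact absurd (Finset.mem_univ _) h'
  · rw [if_neg h]
    refine Finset.sum_eq_zero fun t _ => ?_
    rw [if_neg]
    intro hc
    refine h fun v hv => ?_
    obtain ⟨hvw, hvS⟩ := Finset.mem_erase.mp hv
    have := hc v hvS
    rwa [Function.update_of_ne hvw] at this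

lemma ci_erase {A B C : Finset V} (w : V) (hw : w ∈ B) (hwA : w ∉ A) (hwC : w ∉ C)
    (h : CI p A B C) : CI p A (B.erase w) C := by
  intro f
  have hupd : ∀ (S : Finset V), w ∉ S → ∀ t, Marg p S (Function.update f w t) = Marg p S f := by
    intro S hS t
    exact marg_congr p fun v hv => Function.update_of_ne (fun hvw => hS (by rw [← hvw]; exact hv)) t f
  have key : (∑ t : vals w, Marg p (A ∪ B ∪ C) (Function.update f w t)) * Marg p C f
      = Marg p (A ∪ C) f * ∑ t : vals w, Marg p (B ∪ C) (Function.update f w t) := by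
    rw [Finset.sum_mul, Finset.mul_sum]
    refine Finset.sum_congr rfl fun t _ => ?_
    rw [← hupd C (by exact hwC) t, ← hupd (A ∪ C) (by simp [hwA, hwC]) t]
    exact h (Function.update f w t)
  have h1 : (A ∪ B ∪ C).erase w = A ∪ B.erase w ∪ C := by
    rw [Finset.erase_union_distrib, Finset.erase_union_distrib,
      Finset.erase_eq_of_notMem hwA, Finset.erase_eq_of_notMem hwC]
  have h2 : (B ∪ C).erase w = B.erase w ∪ C := by
    rw [Finset.erase_union_distrib, Finset.erase_eq_of_notMem hwC]
  rw [marg_sum_out p _ w (by simp [hw]) f, marg_sum_out p _ w (by simp [hw]) f, h1, h2] at key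
  exact key

lemma ci_subset {A C : Finset V} : ∀ (n : ℕ) (B B' : Finset V), B.card = n → B' ⊆ B →
    (∀ w ∈ B, w ∉ A) → (∀ w ∈ B, w ∉ C) → CI p A B C → CI p A B' C := by
  intro n
  induction n with
  | zero =>
    intro B B' hc hsub _ _ h
    rw [Finset.card_eq_zero] at hc
    subst hc
    rw [Finset.subset_empty] at hsub
    subst hsub
    exact h
  | succ n ih =>
    intro B B' hc hsub hA hC h
    by_cases hBB : B' = B
    · subst hBB; exact h
    · obtain ⟨w, hwB, hwB'⟩ : ∃ w ∈ B, w ∉ B' := by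
        by_contra h'
        push_neg at h'
        exact hBB (Finset.Subset.antisymm hsub h')
      refine ih (B.erase w) B' ?_ ?_ ?_ ?_ ?_
      · rw [Finset.card_erase_of_mem hwB, hc]; omega
      · intro x hx
        exact Finset.mem_erase.mpr ⟨fun he => hwB' (he ▸ hx), hsub hx⟩
      · exact fun x hx => hA x (Finset.mem_of_mem_erase hx)
      · exact fun x hx => hC x (Finset.mem_of_mem_erase hx)
      · exact ci_erase p w hwB (hA w hwB) (hC w hwB) h

end Aux

lemma factorization_claim
    {V : Type*} [Fintype V] [DecidableEq V] {vals : V → Type*} [∀ v, Fintype (vals v)]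
    (adj : V → V → Prop) (hacyc : Acyclic adj)
    (p : (∀ v, vals v) → ℝ) (hnn : ∀ u, 0 ≤ p u) (hsum : ∑ u, p u = 1)
    (Pa : V → Finset V) (hPa : ∀ X v, v ∈ Pa X ↔ adj v X)
    (hMarkov : ∀ X : V,
      CI p {X} ((Finset.univ.filter (fun v => ¬ Desc adj X v)).erase X \ Pa X) (Pa X)) :
    ∀ (n : ℕ) (S : Finset V), S.card = n → (∀ X ∈ S, Pa X ⊆ S) →
      ∀ f, Marg p S f = ∏ X ∈ S, Marg p (insert X (Pa X)) f / Marg p (Pa X) f := by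
  have hwf : WellFounded (fun a b : V => Desc adj b a) := by
    have h1 : IsIrrefl V (fun a b : V => Desc adj b a) := ⟨fun a h => hacyc a h⟩
    have h2 : IsTrans V (fun a b : V => Desc adj b a) :=
      ⟨fun a b c h1 h2 => Relation.TransGen.trans h2 h1⟩
    exact Finite.wellFounded_of_trans_of_irrefl _
  intro n
  induction n with
  | zero =>
    intro S hc _ f
    rw [Finset.card_eq_zero] at hc
    subst hc
    rw [marg_empty, hsum, Finset.prod_empty]
  | succ n ih =>
    intro S hc hclosed f
    have hne : S.Nonempty := Finset.card_pos.mp (by omega)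
    obtain ⟨X, hXS, hmax⟩ := hwf.has_min ↑S (by exact_mod_cast hne)
    have hXS' : X ∈ S := hXS
    have hmax' : ∀ y ∈ S, ¬ Desc adj X y := fun y hy => hmax y hy
    have hXPa : X ∉ Pa X := fun h => hacyc X (Relation.TransGen.single ((hPa X X).mp h))
    have hPaSub : Pa X ⊆ S.erase X := fun y hy =>
      Finset.mem_erase.mpr ⟨fun he => hXPa (he ▸ hy), hclosed X hXS' hy⟩
    have hclosed' : ∀ Y ∈ S.erase X, Pa Y ⊆ S.erase X := by
      intro Y hY z hz
      obtain ⟨hYX, hYS⟩ := Finset.mem_erase.mp hY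
      refine Finset.mem_erase.mpr ⟨fun he => ?_, hclosed Y hYS hz⟩
      have hadj : adj z Y := (hPa Y z).mp hz
      rw [he] at hadj
      exact hmax' Y hYS (Relation.TransGen.single hadj)
    -- the CI instance specialised to S
    have hsub : S.erase X \ Pa X ⊆ (Finset.univ.filter (fun v => ¬ Desc adj X v)).erase X \ Pa X := by
      intro y hy
      obtain ⟨hy1, hy2⟩ := Finset.mem_sdiff.mp hy
      obtain ⟨hyX, hyS⟩ := Finset.mem_erase.mp hy1
      exact Finset.mem_sdiff.mpr ⟨Finset.mem_erase.mpr ⟨hyX,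
        Finset.mem_filter.mpr ⟨Finset.mem_univ y, hmax' y hyS⟩⟩, hy2⟩
    have hCI : CI p {X} (S.erase X \ Pa X) (Pa X) := by
      refine ci_subset p _ _ _ rfl hsub ?_ ?_ (hMarkov X)
      · intro w hw
        obtain ⟨hw1, _⟩ := Finset.mem_sdiff.mp hw
        obtain ⟨hwX, _⟩ := Finset.mem_erase.mp hw1
        simpa using hwX
      · intro w hw
        exact (Finset.mem_sdiff.mp hw).2
    have key := hCI f
    have e1 : {X} ∪ (S.erase X \ Pa X) ∪ Pa X = S := by
      rw [Finset.union_assoc, Finset.sdiff_union_self_eq_union,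
        Finset.union_eq_left.mpr hPaSub]
      rw [← Finset.insert_eq]
      exact Finset.insert_erase hXS'
    have e2 : ({X} : Finset V) ∪ Pa X = insert X (Pa X) := (Finset.insert_eq X (Pa X)).symm
    have e3 : (S.erase X \ Pa X) ∪ Pa X = S.erase X := by
      rw [Finset.sdiff_union_self_eq_union, Finset.union_eq_left.mpr hPaSub]
    rw [e1, e2, e3] at key
    -- key : Marg p S f * Marg p (Pa X) f = Marg p (insert X (Pa X)) f * Marg p (S.erase X) f
    have hErase := ih (S.erase X) (by rw [Finset.card_erase_of_mem hXS', hc]; omega) hclosed' f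
    by_cases hzero : Marg p (Pa X) f = 0
    · have hS0 : Marg p S f = 0 :=
        le_antisymm (hzero ▸ marg_anti p hnn (hPaSub.trans (Finset.erase_subset X S)) f)
          (marg_nonneg p hnn S f)
      have hins0 : Marg p (insert X (Pa X)) f = 0 :=
        le_antisymm (hzero ▸ marg_anti p hnn (Finset.subset_insert X (Pa X)) f)
          (marg_nonneg p hnn _ f)
      rw [hS0]
      exact (Finset.prod_eq_zero hXS' (by rw [hins0, hzero]; simp)).symm
    · rw [← Finset.mul_prod_erase S _ hXS', ← hErase]
      field_simp
      linarith [key]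


/-- In a Bayesian network satisfying the Markov condition (every node
independent of its non-descendants given its parents), the joint distribution factorizes
as the product over nodes of the conditional probability of the node given its parents. -/
theorem bayesian_network_factorization
    {V : Type*} [Fintype V] [DecidableEq V] {vals : V → Type*} [∀ v, Fintype (vals v)]
    (adj : V → V → Prop) (hacyc : Acyclic adj)
    (p : (∀ v, vals v) → ℝ) (hnn : ∀ u, 0 ≤ p u) (hsum : ∑ u, p u = 1)
    (Pa : V → Finset V) (hPa : ∀ X v, v ∈ Pa X ↔ adj v X)
    (hMarkov : ∀ X : V,
      CI p {X} ((Finset.univ.filter (fun v => ¬ Desc adj X v)).erase X \ Pa X) (Pa X)) :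
    ∀ u, p u = ∏ X : V, Marg p (insert X (Pa X)) u / Marg p (Pa X) u := by
  intro u
  have h := factorization_claim adj hacyc p hnn hsum Pa hPa hMarkov
    (Finset.univ.card) Finset.univ rfl (fun X _ => Finset.subset_univ _) u
  rw [marg_univ] at h
  simpa using h
end

section
/- If a probability distribution P and a DAG G are faithful to each other, then for every variable T the Markov blanket MB(T) is unique and equals the union of the parents of T, the children of T, and the spouses of T (nodes sharing a common child with T). -/
open scoped Classical

/-! Conditioning on parents, children and spouses of `T` blocks every trail leaving `T`: its
second node is conditioned on, and if that node is a collider the third node is a spouse, hence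
conditioned on and, by acyclicity, a non-collider. Conversely, a set `S` d-separating `T` from
everything outside `S` must contain every neighbour of `T` (a one-edge trail has no interior)
and every spouse of `T` (the collider of `T → c ← v` is a child, so it lies in `S` and opens the
trail). By faithfulness the Markov blankets of `T` are exactly these sets `S`, so the set of
parents, children and spouses is the least Markov blanket, and every minimal one equals it. -/

section

variable {V : Type*} {adj : V → V → Prop}

namespace Acyclic

theorem irrefl (h : Acyclic adj) (x : V) : ¬ adj x x :=
  fun hx => h x (.single hx)

theorem asymm (h : Acyclic adj) {x y : V} (hxy : adj x y) : ¬ adj y x :=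
  fun hyx => h x (.head hxy (.single hyx))

theorem ne_of_adj (h : Acyclic adj) {x y : V} (hxy : adj x y) : x ≠ y := by
  rintro rfl
  exact h.irrefl x hxy

end Acyclic

theorem colliderAt_one_iff {a x b : V} {l : List V} :
    ColliderAt adj (a :: x :: b :: l) 1 ↔ adj a x ∧ adj b x := by
  simp [ColliderAt]

theorem colliderAt_two_iff {a b x c : V} {l : List V} :
    ColliderAt adj (a :: b :: x :: c :: l) 2 ↔ adj b x ∧ adj c x := by
  simp [ColliderAt]

theorem not_blocked_pair (Z : Set V) (a b : V) : ¬ Blocked adj Z [a, b] := by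
  rintro ⟨i, x, hi, hlen, -⟩
  simp only [List.length] at hlen
  omega

theorem not_blocked_of_collider_mem {Z : Set V} {a c b : V} (hac : adj a c) (hbc : adj b c)
    (hc : c ∈ Z) : ¬ Blocked adj Z [a, c, b] := by
  rintro ⟨i, x, hi, hlen, hx, hblock⟩
  obtain rfl : i = 1 := by simp only [List.length] at hlen; omega
  obtain rfl : c = x := by simpa using hx
  rcases hblock with ⟨hnc, -⟩ | ⟨-, hcZ, -⟩
  · exact hnc (colliderAt_one_iff.mpr ⟨hac, hbc⟩)
  · exact hcZ hc

theorem not_dsep_of_adj (Z : Set V) {T w : V} (hTw : T ≠ w) (h : adj T w ∨ adj w T) :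
    ¬ DSep adj Z T w := fun hsep =>
  not_blocked_pair Z T w <|
    hsep _ ⟨(by simpa using h : List.IsChain _ [T, w]), rfl, rfl, by simpa using hTw, le_rfl⟩

theorem not_dsep_of_common_child (hacyc : Acyclic adj) {Z : Set V} {T c v : V} (hTv : T ≠ v)
    (hTc : adj T c) (hvc : adj v c) (hc : c ∈ Z) : ¬ DSep adj Z T v := fun hsep =>
  not_blocked_of_collider_mem hTc hvc hc <| hsep _
    ⟨(by simp [hTc, hvc] : List.IsChain _ [T, c, v]), rfl, rfl,
      by simp [hacyc.ne_of_adj hTc, hTv, (hacyc.ne_of_adj hvc).symm], by simp⟩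

theorem mem_of_adj_of_forall_dsep (hacyc : Acyclic adj) {S : Set V} {T w : V}
    (hsep : ∀ N, N ≠ T → N ∉ S → DSep adj S T N) (hw : adj T w ∨ adj w T) : w ∈ S := by
  by_contra hwS
  have hTw : T ≠ w := hw.elim hacyc.ne_of_adj fun h => (hacyc.ne_of_adj h).symm
  exact not_dsep_of_adj S hTw hw (hsep w hTw.symm hwS)

theorem mem_of_common_child_of_forall_dsep (hacyc : Acyclic adj) {S : Set V} {T c v : V}
    (hsep : ∀ N, N ≠ T → N ∉ S → DSep adj S T N) (hvT : v ≠ T) (hTc : adj T c)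
    (hvc : adj v c) : v ∈ S := by
  by_contra hvS
  have hc : c ∈ S := mem_of_adj_of_forall_dsep hacyc hsep (.inl hTc)
  exact not_dsep_of_common_child hacyc hvT.symm hTc hvc hc (hsep v hvT hvS)

theorem dsep_of_forall_mem (hacyc : Acyclic adj) {Z : Set V} {T N : V}
    (hparent : ∀ v, adj v T → v ∈ Z) (hchild : ∀ v, adj T v → v ∈ Z)
    (hspouse : ∀ v c, v ≠ T → adj T c → adj v c → v ∈ Z)
    (hNT : N ≠ T) (hN : N ∉ Z) : DSep adj Z T N := by
  rintro p ⟨hchain, hhead, hlast, hnodup, hlen⟩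
  obtain ⟨b, rest, rfl⟩ : ∃ b rest, p = T :: b :: rest := by
    match p, hlen with
    | a :: b :: rest, _ => exact ⟨b, rest, by simpa using hhead⟩
  have hb : b ∈ Z := ((List.isChain_cons_cons.mp hchain).1).elim (hchild b) (hparent b)
  obtain _ | ⟨c, rest⟩ := rest
  · obtain rfl : N = b := by simpa using hlast.symm
    exact absurd hb hN
  by_cases hcol : ColliderAt adj (T :: b :: c :: rest) 1
  swap
  · exact ⟨1, b, by omega, by simp, rfl, .inl ⟨hcol, hb⟩⟩
  obtain ⟨hTb, hcb⟩ := colliderAt_one_iff.mp hcol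
  have hcT : c ≠ T := by
    rintro rfl
    exact (List.nodup_cons.mp hnodup).1 (by simp)
  have hc : c ∈ Z := hspouse c b hcT hTb hcb
  obtain _ | ⟨d, rest⟩ := rest
  · obtain rfl : N = c := by simpa using hlast.symm
    exact absurd hc hN
  have hnc : ¬ ColliderAt adj (T :: b :: c :: d :: rest) 2 :=
    fun h => hacyc.asymm hcb (colliderAt_two_iff.mp h).1
  exact ⟨2, c, by omega, by simp, rfl, .inl ⟨hnc, hc⟩⟩

theorem dsepS_singleton_compl_iff {Z : Set V} {T : V} :
    DSepS adj Z {T} (Set.univ \ (Z ∪ {T})) ↔ ∀ N, N ≠ T → N ∉ Z → DSep adj Z T N := by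
  simp [DSepS]

end

theorem faithful_markov_blanket_unique_general
    {V : Type*} (adj : V → V → Prop) (hacyc : Acyclic adj)
    (ci : Set V → Set V → Set V → Prop)
    (hfaith : ∀ A B Z : Set V, ci A B Z ↔ DSepS adj Z A B)
    (T : V) :
    let IsMB : Set V → Prop := fun S => T ∉ S ∧ ci {T} (Set.univ \ (S ∪ {T})) S
    let blanket : Set V := {v | adj v T ∨ adj T v ∨
      (v ≠ T ∧ ¬ adj v T ∧ ¬ adj T v ∧ ∃ c, adj T c ∧ adj v c)}
    IsMB blanket ∧
      ∀ S : Set V, IsMB S → (∀ S' : Set V, IsMB S' → ¬ S' ⊂ S) → S = blanket := by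
  intro IsMB blanket
  have isMB_iff (S : Set V) : IsMB S ↔ T ∉ S ∧ ∀ N, N ≠ T → N ∉ S → DSep adj S T N :=
    and_congr_right' ((hfaith _ _ _).trans dsepS_singleton_compl_iff)
  have spouse_mem (v c : V) (hvT : v ≠ T) (hTc : adj T c) (hvc : adj v c) : v ∈ blanket := by
    by_cases hvT' : adj v T <;> by_cases hTv : adj T v
    exacts [.inl hvT', .inl hvT', .inr (.inl hTv), .inr (.inr ⟨hvT, hvT', hTv, c, hTc, hvc⟩)]
  have T_not_mem : T ∉ blanket := by
    rintro (h | h | ⟨hne, -⟩)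
    exacts [hacyc.irrefl T h, hacyc.irrefl T h, hne rfl]
  have blanket_isMB : IsMB blanket := (isMB_iff _).mpr ⟨T_not_mem, fun N hNT hN =>
    dsep_of_forall_mem hacyc (fun _ => .inl) (fun _ => .inr ∘ .inl) spouse_mem hNT hN⟩
  have blanket_subset (S : Set V) (hS : IsMB S) : blanket ⊆ S := by
    have hsep := ((isMB_iff S).mp hS).2
    rintro v (h | h | ⟨hvT, -, -, c, hTc, hvc⟩)
    exacts [mem_of_adj_of_forall_dsep hacyc hsep (.inr h),
      mem_of_adj_of_forall_dsep hacyc hsep (.inl h),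
      mem_of_common_child_of_forall_dsep hacyc hsep hvT hTc hvc]
  exact ⟨blanket_isMB, fun S hS hmin =>
    ((blanket_subset S hS).eq_of_not_ssubset (hmin blanket blanket_isMB)).symm⟩

/-- If a distribution (whose conditional-independence relation is `ci`)
and a DAG are faithful to each other, then the Markov blanket of every variable `T` is
unique and equals parents ∪ children ∪ spouses of `T`: this set is a Markov blanket,
and every (inclusion-)minimal Markov blanket of `T` equals it. -/
theorem faithful_markov_blanket_unique
    {V : Type*} [Fintype V] (adj : V → V → Prop) (hacyc : Acyclic adj)
    (ci : Set V → Set V → Set V → Prop)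
    (hfaith : ∀ A B Z : Set V, ci A B Z ↔ DSepS adj Z A B)
    (T : V) :
    let IsMB : Set V → Prop := fun S => T ∉ S ∧ ci {T} (Set.univ \ (S ∪ {T})) S
    let blanket : Set V := {v | adj v T ∨ adj T v ∨
      (v ≠ T ∧ ¬ adj v T ∧ ¬ adj T v ∧ ∃ c, adj T c ∧ adj v c)}
    IsMB blanket ∧
      ∀ S : Set V, IsMB S → (∀ S' : Set V, IsMB S' → ¬ S' ⊂ S) → S = blanket :=
  faithful_markov_blanket_unique_general adj hacyc ci hfaith T
end

section
/- In a Bayesian network satisfying the Markov condition, the set consisting of the parents, children, and spouses of a node T is a Markov blanket of T: T is conditionally independent of all remaining variables given this set. -/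
open scoped Classical

/-- In a Bayesian network satisfying the Markov condition (so every
d-separation statement holds as a conditional independence, the global Markov property),
the set of parents, children, and spouses of a node `T` is a Markov blanket of `T`:
`T` is conditionally independent of all remaining variables given this set. -/
theorem pa_ch_sp_is_markov_blanket
    {V : Type*} (adj : V → V → Prop) (hacyc : Acyclic adj)
    (ci : Set V → Set V → Set V → Prop)
    (hMarkov : ∀ A B Z : Set V, DSepS adj Z A B → ci A B Z)
    (T : V) :
    let blanket : Set V := {v | adj v T ∨ adj T v ∨
      (v ≠ T ∧ ¬ adj v T ∧ ¬ adj T v ∧ ∃ c, adj T c ∧ adj v c)}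
    ci {T} (Set.univ \ (blanket ∪ {T})) blanket := by
  intro blanket
  apply hMarkov
  intro M hM N hN p hp
  obtain ⟨hchain, hhead, hlast, hnodup, hlen⟩ := hp
  rw [show M = T from hM] at hhead
  have noc : ∀ a b, adj a b → adj b a → False := fun a b h1 h2 =>
    hacyc a (Relation.TransGen.head h1 (Relation.TransGen.single h2))
  have h0 : p[0]'(by omega) = T := by
    rw [List.head?_eq_getElem?, List.getElem?_eq_getElem (by omega)] at hhead
    exact Option.some.inj hhead
  have hlastN : p[p.length - 1]'(by omega) = N := by
    rw [List.getLast?_eq_getElem?, List.getElem?_eq_getElem (by omega)] at hlast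
    exact Option.some.inj hlast
  have hrel : ∀ i (h : i + 1 < p.length),
      adj (p[i]'(by omega)) (p[i+1]'h) ∨ adj (p[i+1]'h) (p[i]'(by omega)) := by
    intro i h
    have := List.isChain_iff_getElem.mp hchain i (by omega)
    simpa using this
  have hNb : N ∉ blanket := fun h => hN.2 (Or.inl h)
  have hNT : N ≠ T := fun h => hN.2 (Or.inr h)
  have hx1 : 1 < p.length := by omega
  set x₁ := p[1]'hx1 with hx1def
  have hadjT : adj T x₁ ∨ adj x₁ T := by
    have := hrel 0 (by omega)
    rwa [h0] at this
  have hx1b : x₁ ∈ blanket := by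
    rcases hadjT with h | h
    · exact Or.inr (Or.inl h)
    · exact Or.inl h
  have hlen3 : 3 ≤ p.length := by
    by_contra hc
    have hl2 : p.length = 2 := by omega
    have : x₁ = N := by rw [hx1def, ← hlastN]; congr 1; omega
    exact hNb (this ▸ hx1b)
  have hx2 : 2 < p.length := by omega
  set x₂ := p[2]'hx2 with hx2def
  have hq1 : p[1]? = some x₁ := List.getElem?_eq_getElem hx1
  have hq0 : p[0]? = some T := by rw [List.getElem?_eq_getElem (by omega)]; exact congrArg some h0
  have hq2 : p[2]? = some x₂ := List.getElem?_eq_getElem hx2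
  rcases hadjT with hTx1 | hx1T
  · -- T → x₁ : x₁ is a child
    by_cases hx2x1 : adj x₂ x₁
    · -- collider at 1; move to position 2. x₂ is in the blanket.
      have hx2T : x₂ ≠ T := by
        intro h
        have := hnodup.getElem_inj_iff.mp (h0.trans h.symm : p[0]'(by omega) = p[2]'hx2)
        omega
      have hx2b : x₂ ∈ blanket := by
        by_cases h1 : adj x₂ T
        · exact Or.inl h1
        · by_cases h2 : adj T x₂
          · exact Or.inr (Or.inl h2)
          · exact Or.inr (Or.inr ⟨hx2T, h1, h2, x₁, hTx1, hx2x1⟩)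
      have hlen4 : 4 ≤ p.length := by
        by_contra hc
        have : x₂ = N := by rw [hx2def, ← hlastN]; congr 1; omega
        exact hNb (this ▸ hx2b)
      refine ⟨2, x₂, by omega, by omega, hq2, Or.inl ⟨?_, hx2b⟩⟩
      rintro ⟨a, x, b, ha, hx, hb, hax, hbx⟩
      rw [hq1] at ha; rw [hq2] at hx
      obtain rfl : a = x₁ := (Option.some.inj ha).symm
      obtain rfl : x = x₂ := (Option.some.inj hx).symm
      exact noc _ _ hax hx2x1
    · -- not a collider at 1 (edge x₁–x₂ must leave x₁ or x₂→x₁ fails)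
      refine ⟨1, x₁, by omega, by omega, hq1, Or.inl ⟨?_, hx1b⟩⟩
      rintro ⟨a, x, b, ha, hx, hb, hax, hbx⟩
      rw [hq1] at hx; rw [hq2] at hb
      obtain rfl : x = x₁ := (Option.some.inj hx).symm
      obtain rfl : b = x₂ := (Option.some.inj hb).symm
      exact hx2x1 hbx
  · -- x₁ → T : x₁ is a parent; position 1 is not a collider since ¬ adj T x₁
    refine ⟨1, x₁, by omega, by omega, hq1, Or.inl ⟨?_, Or.inl hx1T⟩⟩
    rintro ⟨a, x, b, ha, hx, hb, hax, hbx⟩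
    rw [hq0] at ha; rw [hq1] at hx
    obtain rfl : a = T := (Option.some.inj ha).symm
    obtain rfl : x = x₁ := (Option.some.inj hx).symm
    exact noc _ _ hax hx1T
end
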